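/- Let ℬ be a category equipped with a factorization system (ℒ, ℛ) and let 𝒜 be a class of objects of ℬ with the gliding property relative to ℛ. Then the (non-full) subcategory 𝒜^ℛ of ℬ, whose objects are the objects in 𝒜 and whose morphisms are the morphisms of ℛ between them, includes into ℬ via a functor that is stable and relatively full and faithful; the candidates for this inclusion are exactly the morphisms of ℒ whose codomain lies in 𝒜, and the stable factorization of f : B → A (A in 𝒜) is its (ℒ, ℛ)-factorization. -/

import Mathlib

/-!
An `ℒ`-map `n` into an object of `𝒜` is a candidate: orthogonality of `n` against an
`ℛ`-morphism of `𝒜^ℛ` supplies the diagonal, which lies in `ℛ` because `ℛ` is left cancellable.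
Gliding puts the middle object of an `(ℒ, ℛ)`-factorization of `f : B ⟶ A` into `𝒜`, so that
factorization is a stable one. Conversely, if `n` is a candidate then so is the `ℒ`-part `l` of
`n = l ≫ r`; two candidates through which the same map factors differ by an isomorphism, so `r`
is invertible and `n` is in `ℒ`.
-/

open CategoryTheory CategoryTheory.Limits

universe v u₁

namespace Diers

variable {𝒞 : Type u₁} [Category.{v} 𝒞]

/-- `l` is *orthogonal* to `r` (`l ⊥ r`) if every commutative square `u ≫ r = l ≫ v`
admits a unique diagonal filler `d` with `l ≫ d = u` and `d ≫ r = v`. -/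
def Orthogonal {A B X Y : 𝒞} (l : A ⟶ B) (r : X ⟶ Y) : Prop :=
  ∀ (u : A ⟶ X) (v : B ⟶ Y), u ≫ r = l ≫ v → ∃! d : B ⟶ X, l ≫ d = u ∧ d ≫ r = v

/-- An *orthogonality structure* `(ℒ, ℛ)` on `𝒞`: two classes of morphisms with
`ℒ = ^⊥ℛ` (the morphisms left orthogonal to every member of `ℛ`) and `ℛ = ℒ^⊥`
(the morphisms right orthogonal to every member of `ℒ`). -/
structure OrthStructure (𝒞 : Type u₁) [Category.{v} 𝒞] where
  IsL : MorphismProperty 𝒞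
  IsR : MorphismProperty 𝒞
  isL_iff : ∀ {A B : 𝒞} (l : A ⟶ B),
      IsL l ↔ ∀ {X Y : 𝒞} (r : X ⟶ Y), IsR r → Orthogonal l r
  isR_iff : ∀ {X Y : 𝒞} (r : X ⟶ Y),
      IsR r ↔ ∀ {A B : 𝒞} (l : A ⟶ B), IsL l → Orthogonal l r

/-- A *factorization system* `(ℒ, ℛ)`: an orthogonality structure in which every
morphism factors as a left map followed by a right map. -/
structure FactorizationSystem (𝒞 : Type u₁) [Category.{v} 𝒞] extends OrthStructure 𝒞 where
  factor : ∀ {X Y : 𝒞} (f : X ⟶ Y),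
      ∃ (Z : 𝒞) (l : X ⟶ Z) (r : Z ⟶ Y), IsL l ∧ IsR r ∧ l ≫ r = f

theorem OrthStructure.isR_id (S : OrthStructure 𝒞) (X : 𝒞) : S.IsR (𝟙 X) := by
  rw [S.isR_iff]
  intro A B l _ u v huv
  refine ⟨v, ⟨?_, Category.comp_id v⟩, ?_⟩
  · have h : u = l ≫ v := by simpa using huv
    exact h.symm
  · rintro d ⟨-, hd2⟩
    simpa using hd2

theorem OrthStructure.isR_comp (S : OrthStructure 𝒞) {X Y Z : 𝒞}
    {r₁ : X ⟶ Y} {r₂ : Y ⟶ Z} (h₁ : S.IsR r₁) (h₂ : S.IsR r₂) :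
    S.IsR (r₁ ≫ r₂) := by
  rw [S.isR_iff]
  intro A B l hl u v huv
  have o₁ : Orthogonal l r₁ := (S.isR_iff r₁).mp h₁ l hl
  have o₂ : Orthogonal l r₂ := (S.isR_iff r₂).mp h₂ l hl
  obtain ⟨d₂, ⟨hd₂l, hd₂r⟩, hd₂u⟩ :=
    o₂ (u ≫ r₁) v (by rw [Category.assoc]; exact huv)
  obtain ⟨d₁, ⟨hd₁l, hd₁r⟩, hd₁u⟩ := o₁ u d₂ hd₂l.symm
  refine ⟨d₁, ⟨hd₁l, ?_⟩, ?_⟩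
  · rw [← Category.assoc, hd₁r, hd₂r]
  · rintro d ⟨hdl, hdr⟩
    have hdr₁ : d ≫ r₁ = d₂ := by
      refine hd₂u (d ≫ r₁) ⟨?_, ?_⟩
      · rw [← Category.assoc, hdl]
      · rw [Category.assoc]; exact hdr
    exact hd₁u d ⟨hdl, hdr₁⟩

/-- The (non-full) subcategory `𝒜^ℛ` of `𝒞` determined by a class of objects
`P : 𝒞 → Prop`: its objects are the objects satisfying `P`. -/
structure RSub (S : OrthStructure 𝒞) (P : 𝒞 → Prop) : Type u₁ where
  obj : 𝒞
  prop : P obj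

/-- Morphisms of `𝒜^ℛ` are the morphisms of `ℛ` between objects of `𝒜`. -/
instance rSubCategory (S : OrthStructure 𝒞) (P : 𝒞 → Prop) : Category (RSub S P) where
  Hom X Y := {f : X.obj ⟶ Y.obj // S.IsR f}
  id X := ⟨𝟙 X.obj, S.isR_id X.obj⟩
  comp f g := ⟨f.1 ≫ g.1, S.isR_comp f.2 g.2⟩
  id_comp f := Subtype.ext (Category.id_comp f.1)
  comp_id f := Subtype.ext (Category.comp_id f.1)
  assoc f g h := Subtype.ext (Category.assoc f.1 g.1 h.1)

/-- The inclusion functor `𝒜^ℛ ↪ 𝒞`. -/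
def rSubInclusion (S : OrthStructure 𝒞) (P : 𝒞 → Prop) : RSub S P ⥤ 𝒞 where
  obj X := X.obj
  map f := f.1
  map_id _ := rfl
  map_comp _ _ := rfl

/-- A morphism `n : B ⟶ U(A)` is a *candidate* (diagonally universal toward `U`) if for
every `f : B ⟶ U(A₁)`, `v : A₁ ⟶ A₂` and `u : A ⟶ A₂` with `U(v) ∘ f = U(u) ∘ n`,
there exists a unique `w : A ⟶ A₁` with `v ∘ w = u` and `U(w) ∘ n = f`. -/
def IsCandidate {𝒜' : Type*} [Category 𝒜'] (U : 𝒜' ⥤ 𝒞) {B : 𝒞} {A : 𝒜'}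
    (n : B ⟶ U.obj A) : Prop :=
  ∀ {A₁ A₂ : 𝒜'} (f : B ⟶ U.obj A₁) (v : A₁ ⟶ A₂) (u : A ⟶ A₂),
    f ≫ U.map v = n ≫ U.map u → ∃! w : A ⟶ A₁, w ≫ v = u ∧ n ≫ U.map w = f

/-- `U` is *stable* if every morphism `f : B ⟶ U(A)` admits a stable factorization
`f = U(u_f) ∘ n_f` with `n_f` a candidate. -/
def IsStable {𝒜' : Type*} [Category 𝒜'] (U : 𝒜' ⥤ 𝒞) : Prop :=
  ∀ {B : 𝒞} {A : 𝒜'} (f : B ⟶ U.obj A),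
    ∃ (Af : 𝒜') (n : B ⟶ U.obj Af) (u : Af ⟶ A), IsCandidate U n ∧ n ≫ U.map u = f

/-- `U` is *relatively full and faithful* if whenever `U(u₂) ∘ f = U(u₁)` with `u₁, u₂`
morphisms of `𝒜'` and `f` a morphism of `𝒞` between their `U`-images, then `f = U(u)`
for a unique `u`. -/
def RelativelyFullyFaithful {𝒜' : Type*} [Category 𝒜'] (U : 𝒜' ⥤ 𝒞) : Prop :=
  ∀ {A₁ A₂ A : 𝒜'} (u₁ : A₁ ⟶ A) (u₂ : A₂ ⟶ A) (f : U.obj A₁ ⟶ U.obj A₂),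
    f ≫ U.map u₂ = U.map u₁ → ∃! u : A₁ ⟶ A₂, U.map u = f

def HasGlidingProperty (R : MorphismProperty 𝒞) (P : 𝒞 → Prop) : Prop :=
  ∀ {B A : 𝒞} (r : B ⟶ A), R r → P A → P B

namespace OrthStructure

variable (S : OrthStructure 𝒞)

theorem orthogonal_of_isL_of_isR {A B X Y : 𝒞} {l : A ⟶ B} {r : X ⟶ Y}
    (hl : S.IsL l) (hr : S.IsR r) : Orthogonal l r :=
  (S.isL_iff l).mp hl r hr

theorem isR_of_postcomp {X Y Z : 𝒞} {f : X ⟶ Y} {r : Y ⟶ Z}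
    (hfr : S.IsR (f ≫ r)) (hr : S.IsR r) : S.IsR f := by
  rw [S.isR_iff]
  intro A B l hl a b hab
  obtain ⟨e, ⟨hle, her⟩, he_uniq⟩ := S.orthogonal_of_isL_of_isR hl hfr a (b ≫ r)
    (by rw [← Category.assoc, hab, Category.assoc])
  -- `e ≫ f` and `b` are both diagonals of the outer square against `r`
  have hef : e ≫ f = b :=
    (S.orthogonal_of_isL_of_isR hl hr (a ≫ f) (b ≫ r)
      (by rw [← Category.assoc, hab, Category.assoc])).unique
      ⟨by rw [← Category.assoc, hle], by rw [Category.assoc, her]⟩ ⟨hab.symm, rfl⟩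
  refine ⟨e, ⟨hle, hef⟩, fun d ⟨hld, hdf⟩ => he_uniq d ⟨hld, ?_⟩⟩
  rw [← Category.assoc, hdf]

theorem isL_comp_isIso {A B C : 𝒞} {l : A ⟶ B} (e : B ⟶ C) [IsIso e]
    (hl : S.IsL l) : S.IsL (l ≫ e) := by
  rw [S.isL_iff]
  intro X Y r hr u v huv
  obtain ⟨d, ⟨hld, hdr⟩, hd_uniq⟩ := S.orthogonal_of_isL_of_isR hl hr u (e ≫ v)
    (by rw [huv, Category.assoc])
  refine ⟨inv e ≫ d, ⟨by simpa using hld, by simpa using hdr⟩, ?_⟩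
  rintro d' ⟨hld', hd'r⟩
  have hed' : e ≫ d' = d :=
    hd_uniq (e ≫ d') ⟨by simpa using hld', by rw [Category.assoc, hd'r]⟩
  rw [← hed', IsIso.inv_hom_id_assoc]

end OrthStructure

theorem IsCandidate.isIso_of_fac {𝒜' : Type*} [Category 𝒜'] {U : 𝒜' ⥤ 𝒞} {B : 𝒞}
    {A A' : 𝒜'} {n : B ⟶ U.obj A} {l : B ⟶ U.obj A'} (hn : IsCandidate U n)
    (hl : IsCandidate U l) (r : A' ⟶ A) (hlr : l ≫ U.map r = n) : IsIso r := by
  obtain ⟨w, ⟨hwr, hnw⟩, -⟩ := hn l r (𝟙 A) (by rw [hlr, U.map_id, Category.comp_id])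
  have hrw : r ≫ w = 𝟙 A' :=
    (hl l r r rfl).unique
      ⟨by rw [Category.assoc, hwr, Category.comp_id],
        by rw [U.map_comp, ← Category.assoc, hlr, hnw]⟩
      ⟨Category.id_comp r, by rw [U.map_id, Category.comp_id]⟩
  exact ⟨w, hrw, hwr⟩

section RSub

variable (S : OrthStructure 𝒞) (P : 𝒞 → Prop)

theorem isCandidate_of_isL {B : 𝒞} {X : RSub S P} (n : B ⟶ (rSubInclusion S P).obj X)
    (hn : S.IsL n) : IsCandidate (rSubInclusion S P) n := by
  intro A₁ A₂ f v u hfv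
  obtain ⟨d, ⟨hnd, hdv⟩, hd_uniq⟩ := S.orthogonal_of_isL_of_isR hn v.2 f u.1 hfv
  have hd : S.IsR d := S.isR_of_postcomp (hdv ▸ u.2) v.2
  exact ⟨⟨d, hd⟩, ⟨Subtype.ext hdv, hnd⟩,
    fun w ⟨hwv, hnw⟩ => Subtype.ext (hd_uniq w.1 ⟨hnw, congrArg Subtype.val hwv⟩)⟩

theorem rSubInclusion_relativelyFullyFaithful :
    RelativelyFullyFaithful (rSubInclusion S P) := by
  intro A₁ A₂ A u₁ u₂ f hf
  exact ⟨⟨f, S.isR_of_postcomp (hf ▸ u₁.2) u₂.2⟩, rfl, fun u hu => Subtype.ext hu⟩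

end RSub

section Gliding

variable (S : FactorizationSystem 𝒞) {P : 𝒞 → Prop}

theorem exists_isCandidate_of_fac (hP : HasGlidingProperty S.IsR P) {B Z : 𝒞}
    {X : RSub S.toOrthStructure P} {l : B ⟶ Z} {r : Z ⟶ X.obj} (hl : S.IsL l) (hr : S.IsR r) :
    ∃ hZ : P Z, IsCandidate (rSubInclusion S.toOrthStructure P) (A := ⟨Z, hZ⟩) l :=
  ⟨hP r hr X.prop, isCandidate_of_isL S.toOrthStructure P (X := ⟨Z, _⟩) l hl⟩

theorem rSubInclusion_isStable (hP : HasGlidingProperty S.IsR P) :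
    IsStable (rSubInclusion S.toOrthStructure P) := by
  intro B A f
  obtain ⟨Z, l, r, hl, hr, hlr⟩ := S.factor f
  obtain ⟨hZ, hlc⟩ := exists_isCandidate_of_fac S hP (X := A) hl hr
  exact ⟨⟨Z, hZ⟩, l, ⟨r, hr⟩, hlc, hlr⟩

theorem isL_of_isCandidate (hP : HasGlidingProperty S.IsR P) {B : 𝒞}
    {X : RSub S.toOrthStructure P} {n : B ⟶ (rSubInclusion S.toOrthStructure P).obj X}
    (hn : IsCandidate (rSubInclusion S.toOrthStructure P) n) : S.IsL n := by
  obtain ⟨Z, l, r, hl, hr, hlr⟩ := S.factor n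
  obtain ⟨hZ, hlc⟩ := exists_isCandidate_of_fac S hP (X := X) hl hr
  have hr_iso := hn.isIso_of_fac hlc ⟨r, hr⟩ hlr
  have : IsIso r := Functor.map_isIso (rSubInclusion S.toOrthStructure P)
    (⟨r, hr⟩ : (⟨Z, hZ⟩ : RSub S.toOrthStructure P) ⟶ X)
  exact hlr ▸ S.isL_comp_isIso r hl

end Gliding

/-- **Stable functors from a factorization system and a gliding class of objects.**
Let `𝒞` carry a factorization system `(ℒ, ℛ)` and let `P` be a class of objects of `𝒞`
with the gliding property relative to `ℛ` (`r : B ⟶ A` in `ℛ` and `P A` imply `P B`).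
Then the inclusion `𝒜^ℛ ↪ 𝒞` of the subcategory of `P`-objects and `ℛ`-morphisms is
stable and relatively full and faithful; its candidates are exactly the `ℒ`-morphisms
with codomain in `P`; and the stable factorization of any `f : B ⟶ A` with `P A` is
its `(ℒ, ℛ)`-factorization. -/
theorem stable_inclusion_of_gliding (S : FactorizationSystem 𝒞) (P : 𝒞 → Prop)
    (hP : ∀ {B A : 𝒞} (r : B ⟶ A), S.IsR r → P A → P B) :
    IsStable (rSubInclusion S.toOrthStructure P) ∧
    RelativelyFullyFaithful (rSubInclusion S.toOrthStructure P) ∧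
    (∀ {B : 𝒞} {X : RSub S.toOrthStructure P}
        (n : B ⟶ (rSubInclusion S.toOrthStructure P).obj X),
        IsCandidate (rSubInclusion S.toOrthStructure P) n ↔ S.IsL n) ∧
    (∀ {B : 𝒞} {X : RSub S.toOrthStructure P}
        (f : B ⟶ (rSubInclusion S.toOrthStructure P).obj X)
        {Z : 𝒞} (l : B ⟶ Z) (r : Z ⟶ X.obj),
        S.IsL l → S.IsR r → l ≫ r = f →
        ∃ hZ : P Z,
          IsCandidate (rSubInclusion S.toOrthStructure P) (A := ⟨Z, hZ⟩) l) :=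
  ⟨rSubInclusion_isStable S hP,
    rSubInclusion_relativelyFullyFaithful S.toOrthStructure P,
    fun n => ⟨isL_of_isCandidate S hP, isCandidate_of_isL S.toOrthStructure P n⟩,
    fun _ _ _ _ hl hr _ => exists_isCandidate_of_fac S hP hl hr⟩

end Diers
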